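/- arXiv:1710.11149 — 4 statements merged into one kernel-verified Lean document; each statement's English description precedes it below -/
import Mathlib

section
/- For the discrete-time SIS dynamics x_i^{k+1} = x_i^k + h((1 - x_i^k) Σ_j β_{ij} x_j^k - δ_i x_i^k), if x_i^0 ∈ [0,1] for all i, δ_i ≥ 0, β_{ij} ≥ 0, h ≥ 0, h δ_i ≤ 1, and h Σ_{j≠i} β_{ij} ≤ 1 (and h β_{ii} ≤ 1 so that h Σ_j β_{ij} x_j^k ≤ 1 whenever all x_j^k ∈ [0,1]), then x_i^k ∈ [0,1] for all i and all k ≥ 0; i.e., the unit cube [0,1]^n is positively invariant. -/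
/-!
Both the new state and its distance to `1` are sums of nonnegative terms:
`x + h((1 - x)s - δx) = (1 - hδ)x + hs(1 - x)` and `1 - (x + h((1 - x)s - δx)) = (1 - hs)(1 - x) + hδx`,
where the infection pressure `s = ∑ⱼ βᵢⱼ xⱼ` lies in `[0, ∑ⱼ βᵢⱼ]` while `x ∈ [0,1]ⁿ`.
Induction on `k` then keeps every coordinate in `[0,1]`.
-/

open Matrix Set Finset

lemma sum_mul_mem_Icc_of_mem_unitInterval {ι : Type*} (s : Finset ι) {b y : ι → ℝ}
    (hb : ∀ j, 0 ≤ b j) (hy : ∀ j, y j ∈ Icc (0 : ℝ) 1) :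
    ∑ j ∈ s, b j * y j ∈ Icc 0 (∑ j ∈ s, b j) :=
  ⟨sum_nonneg fun j _ => mul_nonneg (hb j) (hy j).1,
    sum_le_sum fun j _ => mul_le_of_le_one_right (hb j) (hy j).2⟩

lemma sis_update_mem_Icc {x s δ h : ℝ} (hx : x ∈ Icc (0 : ℝ) 1) (hs : 0 ≤ s) (hδ : 0 ≤ δ)
    (hh : 0 ≤ h) (hhs : h * s ≤ 1) (hhδ : h * δ ≤ 1) :
    x + h * ((1 - x) * s - δ * x) ∈ Icc (0 : ℝ) 1 := by
  obtain ⟨hx0, hx1⟩ := hx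
  constructor
  · calc (0 : ℝ) ≤ (1 - h * δ) * x + h * s * (1 - x) :=
          add_nonneg (mul_nonneg (by linarith) hx0) (mul_nonneg (mul_nonneg hh hs) (by linarith))
      _ = x + h * ((1 - x) * s - δ * x) := by ring
  · have : 0 ≤ (1 - h * s) * (1 - x) + h * δ * x :=
      add_nonneg (mul_nonneg (by linarith) (by linarith)) (mul_nonneg (mul_nonneg hh hδ) hx0)
    linarith

/-- Positive invariance of the unit cube for the discrete-time SIS model. -/
theorem sis_unit_cube_invariant (n : ℕ) (B : Matrix (Fin n) (Fin n) ℝ)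
    (δ : Fin n → ℝ) (h : ℝ) (x : ℕ → Fin n → ℝ)
    (hB : ∀ i j, 0 ≤ B i j) (hδ : ∀ i, 0 ≤ δ i) (hh : 0 ≤ h)
    (hhδ : ∀ i, h * δ i ≤ 1) (hhB : ∀ i, h * ∑ j, B i j ≤ 1)
    (hx0 : ∀ i, x 0 i ∈ Set.Icc (0 : ℝ) 1)
    (hdyn : ∀ k i, x (k + 1) i =
      x k i + h * ((1 - x k i) * (∑ j, B i j * x k j) - δ i * x k i)) :
    ∀ k i, x k i ∈ Set.Icc (0 : ℝ) 1 := by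
  intro k
  induction k with
  | zero => exact hx0
  | succ k ih =>
    intro i
    obtain ⟨hS0, hSB⟩ := sum_mul_mem_Icc_of_mem_unitInterval univ (hB i) ih
    rw [hdyn k i]
    exact sis_update_mem_Icc (ih i) hS0 (hδ i) hh
      ((mul_le_mul_of_nonneg_left hSB hh).trans (hhB i)) (hhδ i)
end

section
/- Let M be an irreducible nonnegative n×n real matrix whose spectral radius (Perron eigenvalue) equals 1. Then there exists a positive diagonal matrix P such that Mᵀ P M − P is negative semidefinite. -/
/-!
Let `v` and `u` be positive right and left Perron vectors, `Mv = v` and `uᵀM = uᵀ`, and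
`P = diag(u/v)`. Cauchy–Schwarz on each row, weighted by `v`, gives
`(Mx)ᵢ² ≤ (Mv)ᵢ (M(x²/v))ᵢ = vᵢ (M(x²/v))ᵢ`; summing against `uᵢ/vᵢ` bounds `xᵀMᵀPMx`
by `uᵀM(x²/v) = uᵀ(x²/v) = xᵀPx`.

The Perron vectors come from an eigenvector `x` for an eigenvalue of modulus `r = ρ(M)`:
`w = |x|` satisfies `r w ≤ M w`, and irreducibility provides a positive matrix `B` commuting
with `M`, so `Bw` is positive. If `Mw ≠ r w`, then `M(Bw) - r(Bw) = B(Mw - r w)` is positive,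
hence `s(Bw) ≤ M(Bw)` for some `s > r`. That contradicts the Collatz–Wielandt bound `s ≤ ρ(M)`,
which follows from Gelfand's formula because `sᵐ ≤ ‖Mᵐ‖∞`.
-/

open Matrix Filter Topology
open scoped NNReal ENNReal

/-- A nonnegative matrix is irreducible iff for every pair of indices some power
has a positive entry there (strong connectivity of the associated digraph). -/
def MatrixIrreducible {n : ℕ} (M : Matrix (Fin n) (Fin n) ℝ) : Prop :=
  ∀ i j, ∃ k : ℕ, 0 < (M ^ k) i j

theorem spectrum.coe_le_spectralRadius_of_pow_le_nnnorm_pow {A : Type*} [NormedRing A]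
    [NormedAlgebra ℂ A] [CompleteSpace A] {a : A} {r : ℝ≥0} (h : ∀ m, r ^ m ≤ ‖a ^ m‖₊) :
    (r : ℝ≥0∞) ≤ spectralRadius ℂ a := by
  refine ge_of_tendsto (spectrum.pow_nnnorm_pow_one_div_tendsto_nhds_spectralRadius a) ?_
  filter_upwards [eventually_ne_atTop 0] with m hm
  calc (r : ℝ≥0∞) = ((r : ℝ≥0∞) ^ m) ^ (1 / m : ℝ) := by
        rw [one_div, ENNReal.pow_rpow_inv_natCast hm]
    _ ≤ (‖a ^ m‖₊ : ℝ≥0∞) ^ (1 / m : ℝ) := by gcongr; exact_mod_cast h m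

theorem exists_gt_smul_le_of_mul_lt {ι : Type*} [Finite ι] {v w : ι → ℝ} {r : ℝ≥0}
    (h : ∀ i, r * v i < w i) : ∃ s > r, (s : ℝ) • v ≤ w := by
  have hnear : ∀ᶠ s : ℝ≥0 in 𝓝 r, ∀ i, (s : ℝ) * v i < w i := eventually_all.2 fun i =>
    (by fun_prop : Continuous fun s : ℝ≥0 => (s : ℝ) * v i).continuousAt.eventually_lt
      continuousAt_const (h i)
  obtain ⟨s, hs, hrs⟩ :=
    ((hnear.filter_mono nhdsWithin_le_nhds).and (self_mem_nhdsWithin (s := Set.Ioi r))).exists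
  exact ⟨s, hrs, fun i => (hs i).le⟩

variable {ι : Type*} [Fintype ι]

theorem Matrix.mulVec_mono_of_nonneg {M : Matrix ι ι ℝ} (hM : ∀ i j, 0 ≤ M i j) :
    Monotone (M *ᵥ ·) := fun _ _ hxy i =>
  Finset.sum_le_sum fun j _ => mul_le_mul_of_nonneg_left (hxy j) (hM i j)

theorem Matrix.pow_smul_le_pow_mulVec [DecidableEq ι] {M : Matrix ι ι ℝ} (hM : ∀ i j, 0 ≤ M i j)
    {v : ι → ℝ} {r : ℝ} (hr : 0 ≤ r) (h : r • v ≤ M *ᵥ v) (m : ℕ) : r ^ m • v ≤ (M ^ m) *ᵥ v := by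
  induction m with
  | zero => simp
  | succ m ih =>
    calc r ^ (m + 1) • v = r ^ m • (r • v) := by rw [pow_succ, mul_smul]
      _ ≤ r ^ m • (M *ᵥ v) := smul_le_smul_of_nonneg_left h (pow_nonneg hr m)
      _ = M *ᵥ (r ^ m • v) := (mulVec_smul M _ v).symm
      _ ≤ M *ᵥ ((M ^ m) *ᵥ v) := mulVec_mono_of_nonneg hM ih
      _ = (M ^ (m + 1)) *ᵥ v := by rw [mulVec_mulVec, pow_succ']

-- The spectral radius does not depend on the norm; the ℓ∞ operator norm is the convenient one.
attribute [local instance] Matrix.linftyOpNormedRing Matrix.linftyOpNormedAlgebra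

theorem Matrix.nnnorm_map_ofReal [DecidableEq ι] (N : Matrix ι ι ℝ) :
    ‖N.map Complex.ofReal‖₊ = ‖N‖₊ := by
  simp [linfty_opNNNorm_def]

theorem Matrix.coe_le_spectralRadius_of_smul_le_mulVec [DecidableEq ι] {M : Matrix ι ι ℝ}
    (hM : ∀ i j, 0 ≤ M i j) {v : ι → ℝ} (hv : 0 ≤ v) (hv0 : v ≠ 0) {r : ℝ≥0}
    (h : (r : ℝ) • v ≤ M *ᵥ v) : (r : ℝ≥0∞) ≤ spectralRadius ℂ (M.map Complex.ofReal) := by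
  refine spectrum.coe_le_spectralRadius_of_pow_le_nnnorm_pow fun m => ?_
  have hpow := pow_smul_le_pow_mulVec hM r.coe_nonneg h m
  have hnorm : ‖(r : ℝ) ^ m • v‖ ≤ ‖(M ^ m) *ᵥ v‖ := by
    refine (pi_norm_le_iff_of_nonneg (norm_nonneg _)).2 fun i => ?_
    have hi : 0 ≤ ((r : ℝ) ^ m • v) i := (smul_nonneg (by positivity) hv : 0 ≤ (r : ℝ) ^ m • v) i
    calc ‖((r : ℝ) ^ m • v) i‖ = ((r : ℝ) ^ m • v) i := Real.norm_of_nonneg hi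
      _ ≤ ((M ^ m) *ᵥ v) i := hpow i
      _ ≤ ‖((M ^ m) *ᵥ v) i‖ := Real.le_norm_self _
      _ ≤ ‖(M ^ m) *ᵥ v‖ := norm_le_pi_norm _ i
  have hscaled : (r : ℝ) ^ m * ‖v‖ ≤ ‖M ^ m‖ * ‖v‖ := by
    calc (r : ℝ) ^ m * ‖v‖ = ‖(r : ℝ) ^ m • v‖ := by
          rw [norm_smul, Real.norm_of_nonneg (by positivity)]
      _ ≤ ‖(M ^ m) *ᵥ v‖ := hnorm
      _ ≤ ‖M ^ m‖ * ‖v‖ := linfty_opNorm_mulVec _ _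
  have hmap : (M.map Complex.ofReal) ^ m = (M ^ m).map Complex.ofReal :=
    (M.map_pow Complex.ofRealHom m).symm
  rw [hmap, nnnorm_map_ofReal, ← NNReal.coe_le_coe]
  exact_mod_cast le_of_mul_le_mul_right hscaled (norm_pos_iff.2 hv0)

theorem Matrix.exists_pos_commute_of_irreducible [DecidableEq ι] {M : Matrix ι ι ℝ}
    (hM : ∀ i j, 0 ≤ M i j) (hirr : ∀ i j, ∃ k : ℕ, 0 < (M ^ k) i j) :
    ∃ B : Matrix ι ι ℝ, (∀ i j, 0 < B i j) ∧ Commute M B := by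
  choose k hk using hirr
  set K := Finset.univ.sup fun ij : ι × ι => k ij.1 ij.2
  refine ⟨∑ l ∈ Finset.range (K + 1), M ^ l, fun i j => ?_, ?_⟩
  · rw [Matrix.sum_apply]
    have hkK : k i j ∈ Finset.range (K + 1) := Finset.mem_range_succ_iff.2 <|
      Finset.le_sup (f := fun ij : ι × ι => k ij.1 ij.2) (Finset.mem_univ (i, j))
    exact Finset.sum_pos' (fun l _ => pow_apply_nonneg hM l i j) ⟨k i j, hkK, hk i j⟩
  · exact Commute.sum_right _ _ _ fun l _ => Commute.self_pow M l

theorem Matrix.mulVec_apply_pos_of_pos {B : Matrix ι ι ℝ} (hB : ∀ i j, 0 < B i j) {y : ι → ℝ}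
    (hy : 0 ≤ y) (hy0 : y ≠ 0) (i : ι) : 0 < (B *ᵥ y) i := by
  obtain ⟨j, hj⟩ := Function.ne_iff.1 hy0
  exact Finset.sum_pos' (fun l _ => mul_nonneg (hB i l).le (hy l))
    ⟨j, Finset.mem_univ j, mul_pos (hB i j) ((hy j).lt_of_ne' hj)⟩

theorem Matrix.smul_norm_le_mulVec_norm {M : Matrix ι ι ℝ} (hM : ∀ i j, 0 ≤ M i j)
    {μ : ℂ} {x : ι → ℂ} (hx : M.map Complex.ofReal *ᵥ x = μ • x) :
    ‖μ‖ • (fun i => ‖x i‖) ≤ M *ᵥ fun i => ‖x i‖ := fun i => by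
  calc ‖μ‖ * ‖x i‖ = ‖(M.map Complex.ofReal *ᵥ x) i‖ := by rw [hx, Pi.smul_apply, norm_smul]
    _ ≤ ∑ j, ‖(M i j : ℂ) * x j‖ := norm_sum_le _ _
    _ = (M *ᵥ fun i => ‖x i‖) i := Finset.sum_congr rfl fun j _ => by
        rw [norm_mul, Complex.norm_real, Real.norm_of_nonneg (hM i j)]

theorem Matrix.exists_mulVec_eq_smul_nnnorm_eq_spectralRadius [DecidableEq ι] [Nonempty ι]
    (A : Matrix ι ι ℂ) :
    ∃ μ : ℂ, ∃ x : ι → ℂ, x ≠ 0 ∧ A *ᵥ x = μ • x ∧ (‖μ‖₊ : ℝ≥0∞) = spectralRadius ℂ A := by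
  obtain ⟨μ, hμ, hμA⟩ := spectrum.exists_nnnorm_eq_spectralRadius A
  rw [← spectrum_toLin', ← Module.End.hasEigenvalue_iff_mem_spectrum] at hμ
  obtain ⟨x, hx⟩ := hμ.exists_hasEigenvector
  exact ⟨μ, x, hx.2, by simpa using Module.End.mem_eigenspace_iff.1 hx.1, hμA⟩

theorem Matrix.exists_pos_mulVec_eq_smul_of_irreducible [DecidableEq ι] [Nonempty ι]
    {M : Matrix ι ι ℝ} (hM : ∀ i j, 0 ≤ M i j) (hirr : ∀ i j, ∃ k : ℕ, 0 < (M ^ k) i j) {r : ℝ≥0}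
    (hρ : spectralRadius ℂ (M.map Complex.ofReal) = r) :
    ∃ v : ι → ℝ, (∀ i, 0 < v i) ∧ M *ᵥ v = (r : ℝ) • v := by
  obtain ⟨μ, x, hx0, hx, hμ⟩ :=
    exists_mulVec_eq_smul_nnnorm_eq_spectralRadius (M.map Complex.ofReal)
  rw [hρ, ENNReal.coe_inj] at hμ
  set w : ι → ℝ := fun i => ‖x i‖
  have hw : 0 ≤ w := fun i => norm_nonneg _
  have hw0 : w ≠ 0 := fun h => hx0 (funext fun i => norm_eq_zero.1 (congrFun h i))
  have hsub : (r : ℝ) • w ≤ M *ᵥ w := by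
    simpa [← hμ] using smul_norm_le_mulVec_norm hM hx
  obtain ⟨B, hB, hBM⟩ := exists_pos_commute_of_irreducible hM hirr
  have hBw : ∀ i, 0 < (B *ᵥ w) i := mulVec_apply_pos_of_pos hB hw hw0
  refine ⟨B *ᵥ w, hBw, ?_⟩
  have hMB : ∀ y, M *ᵥ (B *ᵥ y) = B *ᵥ (M *ᵥ y) := fun y => by
    rw [mulVec_mulVec, hBM.eq, ← mulVec_mulVec]
  by_contra hne
  have hgap : M *ᵥ w - (r : ℝ) • w ≠ 0 := fun h => hne <| by
    rw [hMB, sub_eq_zero.1 h, mulVec_smul]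
  have hlt : ∀ i, r * (B *ᵥ w) i < (M *ᵥ (B *ᵥ w)) i := fun i => by
    have := mulVec_apply_pos_of_pos hB (sub_nonneg.2 hsub) hgap i
    rwa [mulVec_sub, mulVec_smul, ← hMB, Pi.sub_apply, Pi.smul_apply, smul_eq_mul,
      sub_pos] at this
  obtain ⟨s, hrs, hs⟩ := exists_gt_smul_le_of_mul_lt hlt
  have hBw0 : B *ᵥ w ≠ 0 := fun h => (hBw (Classical.arbitrary ι)).ne' (congrFun h _)
  have hsρ := coe_le_spectralRadius_of_smul_le_mulVec hM (fun i => (hBw i).le) hBw0 hs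
  rw [hρ, ENNReal.coe_le_coe] at hsρ
  exact hsρ.not_gt hrs

theorem Matrix.spectrum_transpose [DecidableEq ι] {R : Type*} [CommRing R] (A : Matrix ι ι R) :
    spectrum R Aᵀ = spectrum R A := by
  ext μ
  simp only [spectrum.mem_iff, not_iff_not, algebraMap_eq_diagonal]
  rw [← isUnit_transpose, transpose_sub, diagonal_transpose, transpose_transpose]

theorem Matrix.spectralRadius_transpose [DecidableEq ι] {𝕜 : Type*} [NormedField 𝕜]
    (A : Matrix ι ι 𝕜) : spectralRadius 𝕜 Aᵀ = spectralRadius 𝕜 A := by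
  simp only [spectralRadius, spectrum_transpose]

theorem Matrix.dotProduct_diagonal_mulVec [DecidableEq ι] (p x : ι → ℝ) :
    x ⬝ᵥ (diagonal p *ᵥ x) = ∑ i, p i * x i ^ 2 := by
  simp only [dotProduct, mulVec_diagonal]
  exact Finset.sum_congr rfl fun i _ => by ring

theorem Matrix.sq_mulVec_le_mulVec_mul_mulVec_sq_div {M : Matrix ι ι ℝ} (hM : ∀ i j, 0 ≤ M i j)
    {v : ι → ℝ} (hv : ∀ i, 0 < v i) (x : ι → ℝ) (i : ι) :
    (M *ᵥ x) i ^ 2 ≤ (M *ᵥ v) i * (M *ᵥ fun j => x j ^ 2 / v j) i :=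
  Finset.sum_sq_le_sum_mul_sum_of_sq_le_mul _
    (fun j _ => mul_nonneg (hM i j) (hv j).le)
    (fun j _ => mul_nonneg (hM i j) (div_nonneg (sq_nonneg _) (hv j).le))
    (fun j _ => le_of_eq (by field_simp [(hv j).ne']))

theorem Matrix.dotProduct_transpose_mul_diagonal_mul_sub_diagonal_mulVec_nonpos [DecidableEq ι]
    {M : Matrix ι ι ℝ} (hM : ∀ i j, 0 ≤ M i j) {u v : ι → ℝ} (hu : 0 ≤ u)
    (hv : ∀ i, 0 < v i) (hMv : M *ᵥ v ≤ v) (huM : u ᵥ* M ≤ u) (x : ι → ℝ) :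
    x ⬝ᵥ ((Mᵀ * diagonal (u / v) * M - diagonal (u / v)) *ᵥ x) ≤ 0 := by
  set y : ι → ℝ := fun j => x j ^ 2 / v j
  have hy : 0 ≤ y := fun j => div_nonneg (sq_nonneg _) (hv j).le
  have hp : ∀ i, 0 ≤ u i / v i := fun i => div_nonneg (hu i) (hv i).le
  rw [sub_mulVec, dotProduct_sub, sub_nonpos, Matrix.mul_assoc, ← mulVec_mulVec,
    ← mulVec_mulVec, dotProduct_mulVec, vecMul_transpose, dotProduct_diagonal_mulVec,
    dotProduct_diagonal_mulVec]
  calc ∑ i, (u / v) i * (M *ᵥ x) i ^ 2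
      ≤ ∑ i, u i / v i * ((M *ᵥ v) i * (M *ᵥ y) i) := Finset.sum_le_sum fun i _ =>
        mul_le_mul_of_nonneg_left (sq_mulVec_le_mulVec_mul_mulVec_sq_div hM hv x i) (hp i)
    _ ≤ ∑ i, u i / v i * (v i * (M *ᵥ y) i) := Finset.sum_le_sum fun i _ =>
        mul_le_mul_of_nonneg_left (mul_le_mul_of_nonneg_right (hMv i)
          (by simpa using mulVec_mono_of_nonneg hM hy i)) (hp i)
    _ = u ⬝ᵥ (M *ᵥ y) := Finset.sum_congr rfl fun i _ => by field_simp [(hv i).ne']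
    _ = (u ᵥ* M) ⬝ᵥ y := dotProduct_mulVec _ _ _
    _ ≤ u ⬝ᵥ y := dotProduct_le_dotProduct_of_nonneg_right huM hy
    _ = ∑ i, (u / v) i * x i ^ 2 := Finset.sum_congr rfl fun i _ => by
        simp only [y, Pi.div_apply]; ring

theorem exists_pos_diag_neg_semidef_general (n : ℕ)
    (M : Matrix (Fin n) (Fin n) ℝ)
    (hM : ∀ i j, 0 ≤ M i j) (hirr : MatrixIrreducible M)
    (hρ : spectralRadius ℂ (M.map Complex.ofReal) = 1) :
    ∃ p : Fin n → ℝ, (∀ i, 0 < p i) ∧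
      ∀ v : Fin n → ℝ,
        v ⬝ᵥ ((Mᵀ * Matrix.diagonal p * M - Matrix.diagonal p).mulVec v) ≤ 0 := by
  have : Nonempty (Fin n) := by
    by_contra h
    rw [not_nonempty_iff] at h
    simp at hρ
  obtain ⟨v, hv, hMv⟩ :=
    exists_pos_mulVec_eq_smul_of_irreducible hM hirr (r := 1) (by simpa using hρ)
  have hρT : spectralRadius ℂ (Mᵀ.map Complex.ofReal) = (1 : ℝ≥0) := by
    rw [transpose_map, spectralRadius_transpose, hρ, ENNReal.coe_one]
  obtain ⟨u, hu, huM⟩ := exists_pos_mulVec_eq_smul_of_irreducible (M := Mᵀ) (fun i j => hM j i)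
    (fun i j => (hirr j i).imp fun k hk => by rwa [← transpose_pow]) hρT
  refine ⟨u / v, fun i => div_pos (hu i) (hv i),
    dotProduct_transpose_mul_diagonal_mul_sub_diagonal_mulVec_nonpos hM (fun i => (hu i).le) hv
      ?_ ?_⟩
  · rw [hMv, NNReal.coe_one, one_smul]
  · rw [← mulVec_transpose, huM, NNReal.coe_one, one_smul]

/-- For an irreducible nonnegative matrix with spectral radius 1, there exists a
positive diagonal matrix `P` such that `MᵀPM - P` is negative semidefinite. -/
theorem exists_pos_diag_neg_semidef (n : ℕ) (hn : 0 < n)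
    (M : Matrix (Fin n) (Fin n) ℝ)
    (hM : ∀ i j, 0 ≤ M i j) (hirr : MatrixIrreducible M)
    (hρ : spectralRadius ℂ (M.map Complex.ofReal) = 1) :
    ∃ p : Fin n → ℝ, (∀ i, 0 < p i) ∧
      ∀ v : Fin n → ℝ,
        v ⬝ᵥ ((Mᵀ * Matrix.diagonal p * M - Matrix.diagonal p).mulVec v) ≤ 0 :=
  exists_pos_diag_neg_semidef_general n M hM hirr hρ
end

section
/- Let S be a symmetric n×n real matrix such that Sv = 0 for some vector v with all entries strictly positive, and suppose all off-diagonal entries of S are nonnegative (S is a symmetric Metzler-type matrix). Then the largest eigenvalue of S is 0, i.e., S is negative semidefinite. -/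
/-!
Writing `x = v * y`, the row relations `∑ j, S i j * v j = 0` turn the quadratic form into
`-½ ∑ i j, S i j * v i * v j * (y i - y j) ^ 2`, a combination of squares with nonnegative
weights, since only off-diagonal entries of `S` contribute.
-/

open Matrix Finset

namespace Matrix

variable {ι R : Type*} [Fintype ι]

theorem sum_mul_mul_sq_sub_eq_of_mulVec_eq_zero [CommRing R] {S : Matrix ι ι R} (hS : S.IsSymm)
    {v : ι → R} (hSv : S *ᵥ v = 0) (y : ι → R) :
    ∑ i, ∑ j, S i j * v i * v j * (y i - y j) ^ 2 = -(2 * ((v * y) ⬝ᵥ S *ᵥ (v * y))) := by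
  have hrow (i : ι) : ∑ j, S i j * v j = 0 := congrFun hSv i
  have hcol (j : ι) : ∑ i, S i j * v i = 0 := by
    simpa only [hS.apply j] using hrow j
  have hleft : ∑ i, ∑ j, S i j * v j * (v i * y i ^ 2) = 0 :=
    sum_eq_zero fun i _ => by rw [← sum_mul, hrow i, zero_mul]
  have hright : ∑ i, ∑ j, S i j * v i * (v j * y j ^ 2) = 0 := by
    rw [sum_comm]
    exact sum_eq_zero fun j _ => by rw [← sum_mul, hcol j, zero_mul]
  have hcross : (v * y) ⬝ᵥ S *ᵥ (v * y) = ∑ i, ∑ j, S i j * v i * v j * (y i * y j) := by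
    simp only [dotProduct, mulVec, Pi.mul_apply, mul_sum]
    exact sum_congr rfl fun i _ => sum_congr rfl fun j _ => by ring
  calc ∑ i, ∑ j, S i j * v i * v j * (y i - y j) ^ 2
      = ∑ i, ∑ j, S i j * v j * (v i * y i ^ 2) + ∑ i, ∑ j, S i j * v i * (v j * y j ^ 2)
          - 2 * ∑ i, ∑ j, S i j * v i * v j * (y i * y j) := by
        simp only [mul_sum, ← sum_add_distrib, ← sum_sub_distrib]
        exact sum_congr rfl fun i _ => sum_congr rfl fun j _ => by ring
    _ = -(2 * ((v * y) ⬝ᵥ S *ᵥ (v * y))) := by rw [hleft, hright, hcross]; ring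

theorem dotProduct_mulVec_nonpos_of_mulVec_eq_zero
    [Field R] [LinearOrder R] [IsStrictOrderedRing R] {S : Matrix ι ι R} (hS : S.IsSymm)
    (hoff : ∀ i j, i ≠ j → 0 ≤ S i j) {v : ι → R}
    (hv : ∀ i, 0 < v i) (hSv : S *ᵥ v = 0) (x : ι → R) : x ⬝ᵥ S *ᵥ x ≤ 0 := by
  have hx : v * (x / v) = x := funext fun i => mul_div_cancel₀ (x i) (hv i).ne'
  have hsum : 0 ≤ ∑ i, ∑ j, S i j * v i * v j * ((x / v) i - (x / v) j) ^ 2 := by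
    refine sum_nonneg fun i _ => sum_nonneg fun j _ => ?_
    rcases eq_or_ne i j with rfl | hij
    · simp
    · exact mul_nonneg (mul_nonneg (mul_nonneg (hoff i j hij) (hv i).le) (hv j).le) (sq_nonneg _)
  rw [sum_mul_mul_sq_sub_eq_of_mulVec_eq_zero hS hSv, hx] at hsum
  linarith

end Matrix

/-- A symmetric matrix with nonnegative off-diagonal entries that annihilates a
strictly positive vector is negative semidefinite. -/
theorem symm_metzler_neg_semidef (n : ℕ) (S : Matrix (Fin n) (Fin n) ℝ)
    (hsymm : Sᵀ = S)
    (hoff : ∀ i j, i ≠ j → 0 ≤ S i j)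
    (v : Fin n → ℝ) (hv : ∀ i, 0 < v i)
    (hSv : S.mulVec v = 0) :
    ∀ x : Fin n → ℝ, x ⬝ᵥ S.mulVec x ≤ 0 :=
  dotProduct_mulVec_nonpos_of_mulVec_eq_zero hsymm hoff hv hSv
end

section
/- Suppose x* is a fixed point of the discrete-time SIS dynamics x ↦ x + h((I − diag(x))B − D)x with h ≠ 0, all components x*_i ∈ [0,1], and B nonnegative irreducible, D diagonal nonnegative. Then either x* = 0, or every component of x* is strictly positive (i.e., a nonzero equilibrium in [0,1]^n must be strictly positive in every coordinate). -/
open Matrix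

/-!
At a zero coordinate `i` of an equilibrium the infection pressure `∑ j, B i j * x j` vanishes,
so every neighbour `j` of `i` (with `B i j > 0`) has `x j = 0` as well. The zero set of `x` is thus
closed under the edges of the graph of `B`, hence under its paths, i.e. under positive entries of
the powers of `B`. Irreducibility makes every coordinate reachable from a zero one, so a single
zero coordinate forces `x = 0`.
-/

lemma eq_zero_of_sum_mul_eq_zero {ι : Type*} [Fintype ι] {b x : ι → ℝ}
    (hb : ∀ j, 0 ≤ b j) (hx : ∀ j, 0 ≤ x j) (hsum : ∑ j, b j * x j = 0) {j : ι}
    (hj : 0 < b j) : x j = 0 := by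
  have hterm := (Finset.sum_eq_zero_iff_of_nonneg fun j _ => mul_nonneg (hb j) (hx j)).1 hsum j
    (Finset.mem_univ j)
  exact (mul_eq_zero.1 hterm).resolve_left hj.ne'

lemma eq_zero_of_pow_apply_pos {ι : Type*} [Fintype ι] [DecidableEq ι] {B : Matrix ι ι ℝ}
    {x : ι → ℝ} (hB : ∀ i j, 0 ≤ B i j) (hclosed : ∀ i j, x i = 0 → 0 < B i j → x j = 0)
    (k : ℕ) {i j : ι} (hi : x i = 0) (hk : 0 < (B ^ k) i j) : x j = 0 := by
  induction k generalizing j with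
  | zero =>
    obtain rfl : i = j := by
      by_contra hij
      simp [one_apply_ne hij] at hk
    exact hi
  | succ k ih =>
    rw [pow_succ, mul_apply] at hk
    obtain ⟨l, -, hl⟩ : ∃ l ∈ Finset.univ, 0 < (B ^ k) i l * B l j :=
      Finset.exists_lt_of_sum_lt (by rwa [Finset.sum_const_zero])
    have hpos := (pos_and_pos_or_neg_and_neg_of_mul_pos hl).resolve_right
      fun h => (pow_apply_nonneg hB k i l).not_gt h.1
    exact hclosed l j (ih hpos.1) hpos.2

lemma MatrixIrreducible.eq_zero_or_forall_ne_zero {n : ℕ} {B : Matrix (Fin n) (Fin n) ℝ}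
    (hirr : MatrixIrreducible B) (hB : ∀ i j, 0 ≤ B i j) {x : Fin n → ℝ}
    (hclosed : ∀ i j, x i = 0 → 0 < B i j → x j = 0) : x = 0 ∨ ∀ i, x i ≠ 0 := by
  refine or_iff_not_imp_right.2 fun hzero => ?_
  push Not at hzero
  obtain ⟨i, hi⟩ := hzero
  funext j
  obtain ⟨k, hk⟩ := hirr i j
  exact eq_zero_of_pow_apply_pos hB hclosed k hi hk

theorem equilibrium_zero_or_pos_general (n : ℕ) (B : Matrix (Fin n) (Fin n) ℝ)
    (δ : Fin n → ℝ)
    (hB : ∀ i j, 0 ≤ B i j) (hirr : MatrixIrreducible B)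
    (x : Fin n → ℝ) (hx : ∀ i, x i ∈ Set.Icc (0 : ℝ) 1)
    (heq : ∀ i, (1 - x i) * (∑ j, B i j * x j) = δ i * x i) :
    x = 0 ∨ ∀ i, 0 < x i := by
  have hclosed : ∀ i j, x i = 0 → 0 < B i j → x j = 0 := fun i j hi hij => by
    have hsum : ∑ j, B i j * x j = 0 := by simpa [hi] using heq i
    exact eq_zero_of_sum_mul_eq_zero (hB i) (fun j => (hx j).1) hsum hij
  exact (hirr.eq_zero_or_forall_ne_zero hB hclosed).imp_right
    fun hne i => (hx i).1.lt_of_ne' (hne i)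

/-- A nonzero equilibrium of the SIS dynamics in `[0,1]^n`, with `B` nonnegative
irreducible, must be strictly positive in every coordinate. -/
theorem equilibrium_zero_or_pos (n : ℕ) (B : Matrix (Fin n) (Fin n) ℝ)
    (δ : Fin n → ℝ) (h : ℝ) (hh : h ≠ 0)
    (hB : ∀ i j, 0 ≤ B i j) (hirr : MatrixIrreducible B)
    (hδ : ∀ i, 0 ≤ δ i)
    (x : Fin n → ℝ) (hx : ∀ i, x i ∈ Set.Icc (0 : ℝ) 1)
    (heq : ∀ i, (1 - x i) * (∑ j, B i j * x j) = δ i * x i) :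
    x = 0 ∨ ∀ i, 0 < x i :=
  equilibrium_zero_or_pos_general n B δ hB hirr x hx heq
end
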